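/- arXiv:1411.4672 — 2 statements merged into one kernel-verified Lean document; each statement's English description precedes it below -/
import Mathlib

section
/- Let C be a coalgebra over a field k and g, h grouplike elements of C. Then: (1) P^0_{g,h}(C) = 0 if g ≠ h, and P^0_{g,g}(C) = k; (2) P^1_{g,h}(C) is isomorphic as a k-vector space to P_{h,g}(C)/k(h−g), where P_{h,g}(C) is the space of (h,g)-primitive elements of C. -/
/-! In degree 0 the differential is `1 ↦ g - h`, so `Z⁰` is `k` or `0` according as `g = h`,
and `B⁰ = 0`. In degree 1, through `C ≅ C^{⊗1}`, the differential is
`c ↦ g ⊗ c - Δ c + c ⊗ h`, whose kernel is exactly `P_{h,g}(C)`, while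
`B¹ = im ∂⁰ = k (g - h) = k (h - g)`. -/

open TensorProduct

universe u

namespace PrimCohPaper

/-- A bundled `k`-module in universe `u`. -/
structure Mod' (k : Type u) [CommRing k] : Type (u + 1) where
  carrier : Type u
  [isAddCommGroup : AddCommGroup carrier]
  [isModule : Module k carrier]

attribute [instance] Mod'.isAddCommGroup Mod'.isModule

instance (k : Type u) [CommRing k] : CoeSort (Mod' k) (Type u) :=
  ⟨Mod'.carrier⟩

section Core

variable (k : Type u) [CommRing k] (C : Type u) [AddCommGroup C] [Module k C]

/-- The `n`-th tensor power `C^{⊗ n}` of `C`, bundled. -/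
noncomputable def TpowM : ℕ → Mod' k
  | 0 => { carrier := k }
  | n + 1 => { carrier := C ⊗[k] (TpowM n : Type u) }

/-- The `n`-th tensor power `C^{⊗ n}` of `C` (with `Tpow 0 = k` and
`Tpow (n+1) = C ⊗ Tpow n`). -/
noncomputable abbrev Tpow (n : ℕ) : Type u := (TpowM k C n : Type u)

/-- `x ↦ g ⊗ x`. -/
noncomputable def gLeft (g : C) (n : ℕ) : Tpow k C n →ₗ[k] Tpow k C (n + 1) :=
  TensorProduct.mk k C (Tpow k C n) g

/-- `x ↦ x ⊗ h`. -/
noncomputable def hRight (h : C) : ∀ n : ℕ, Tpow k C n →ₗ[k] Tpow k C (n + 1)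
  | 0 => TensorProduct.mk k C k h
  | n + 1 => LinearMap.lTensor C (hRight h n)

variable [Coalgebra k C]

/-- Apply the comultiplication in the leftmost slot. -/
noncomputable def deltaLeft (n : ℕ) : Tpow k C (n + 1) →ₗ[k] Tpow k C (n + 2) :=
  (TensorProduct.assoc k C C (Tpow k C n)).toLinearMap ∘ₗ
    LinearMap.rTensor (Tpow k C n) (Coalgebra.comul (R := k) (A := C))

/-- The alternating sum `Σ_{i=0}^{n-1} (-1)^i Id^{⊗i} ⊗ Δ ⊗ Id^{⊗(n-i-1)}`
(the Hochschild-type differential `D_n`). -/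
noncomputable def Dmap : ∀ n : ℕ, Tpow k C n →ₗ[k] Tpow k C (n + 1)
  | 0 => 0
  | n + 1 =>
    deltaLeft k C n -
      (show Tpow k C (n + 1) →ₗ[k] Tpow k C (n + 2) from LinearMap.lTensor C (Dmap n))

/-- The cobar-type differential
`∂^n_{g,h} = g ⊗ Id^{⊗n} − D_n + (−1)^{n+1} Id^{⊗n} ⊗ h`
of Stefan–Van Oystaeyen (with `∂^0_{g,h}(1) = g − h`). -/
noncomputable def cobar (g h : C) (n : ℕ) : Tpow k C n →ₗ[k] Tpow k C (n + 1) :=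
  gLeft k C g n - Dmap k C n + ((-1 : ℤ) ^ (n + 1)) • hRight k C h n

/-- Cocycles `Z^n_{g,h}(C) = ker ∂^n_{g,h}`. -/
noncomputable def Zc (g h : C) (n : ℕ) : Submodule k (Tpow k C n) :=
  LinearMap.ker (cobar k C g h n)

/-- Coboundaries `B^n_{g,h}(C) = im ∂^{n-1}_{g,h}` (zero for `n = 0`). -/
noncomputable def Bc (g h : C) : ∀ n : ℕ, Submodule k (Tpow k C n)
  | 0 => ⊥
  | n + 1 => LinearMap.range (cobar k C g h n)

/-- The `n`-th primitive cohomology `𝔓^n_{g,h}(C) = Z^n_{g,h}(C)/B^n_{g,h}(C)`. -/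
noncomputable abbrev PrimCoh (g h : C) (n : ℕ) : Type u :=
  Zc k C g h n ⧸ (Bc k C g h n).comap (Zc k C g h n).subtype

/-- A grouplike element of a coalgebra: `Δ(g) = g ⊗ g` and `ε(g) = 1`. -/
def IsGrouplike (g : C) : Prop :=
  Coalgebra.comul (R := k) g = g ⊗ₜ[k] g ∧ Coalgebra.counit (R := k) g = (1 : k)

/-- The primitive cohomological dimension of a coalgebra: the supremum of all `n` with
`𝔓^n_{g,h}(C) ≠ 0` for some grouplike `g, h` (equal to `⊥ = -∞` if `C` has no grouplike
elements). -/
noncomputable def PCdim : WithBot ℕ∞ :=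
  ⨆ (n : ℕ) (g : C) (h : C) (_ : IsGrouplike k C g) (_ : IsGrouplike k C h)
    (_ : Nontrivial (PrimCoh k C g h n)), (n : WithBot ℕ∞)

/-- The identification `C ≃ C^{⊗1}`. -/
noncomputable def t1equiv : C ≃ₗ[k] Tpow k C 1 :=
  (TensorProduct.rid k C).symm

/-- The identification `C ⊗ C ≃ C^{⊗2}`. -/
noncomputable def t2equiv : (C ⊗[k] C) ≃ₗ[k] Tpow k C 2 :=
  TensorProduct.congr (LinearEquiv.refl k C) (t1equiv k C)

end Core

/-- The space `P_{h,g}(C)` of `(h,g)`-primitive elements: `x` with `Δ(x) = x ⊗ h + g ⊗ x`. -/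
noncomputable def skewPrim (k : Type u) [Field k] (C : Type u) [AddCommGroup C] [Module k C]
    [Coalgebra k C] (h g : C) : Submodule k C :=
  LinearMap.ker
    (Coalgebra.comul (R := k) (A := C) -
      (((TensorProduct.mk k C C).flip h) + TensorProduct.mk k C C g))

section Subquotient

variable {R M N : Type*} [Ring R] [AddCommGroup M] [Module R M] [AddCommGroup N] [Module R N]

noncomputable def subquotientCongr (e : M ≃ₗ[R] N) {p q : Submodule R M}
    {p' q' : Submodule R N} (hp : p.map (e : M →ₗ[R] N) = p')
    (hq : q.map (e : M →ₗ[R] N) = q') :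
    (p ⧸ q.comap p.subtype) ≃ₗ[R] (p' ⧸ q'.comap p'.subtype) :=
  Submodule.Quotient.equiv _ _ ((e.submoduleMap p).trans (LinearEquiv.ofEq _ _ hp)) <| by
    subst hp hq
    ext ⟨y, hy⟩
    obtain ⟨x, hxp, rfl⟩ := Submodule.mem_map.mp hy
    simp [Submodule.mem_comap]

end Subquotient

section CobarLowDegrees

variable (k : Type u) [CommRing k] (C : Type u) [AddCommGroup C] [Module k C] [Coalgebra k C]

lemma cobar_apply (g h : C) (n : ℕ) (x : Tpow k C n) :
    cobar k C g h n x =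
      gLeft k C g n x - Dmap k C n x + ((-1 : ℤ) ^ (n + 1)) • hRight k C h n x :=
  rfl

lemma cobar_zero (g h : C) :
    cobar k C g h 0 = LinearMap.toSpanSingleton k (Tpow k C 1) (t1equiv k C (g - h)) := by
  refine LinearMap.ext_ring ?_
  change g ⊗ₜ[k] (1 : k) - 0 + (-1 : ℤ) ^ 1 • h ⊗ₜ[k] (1 : k) =
    (1 : k) • (g - h) ⊗ₜ[k] (1 : k)
  rw [TensorProduct.sub_tmul]
  simp [sub_eq_add_neg]

lemma Dmap_one : Dmap k C 1 = deltaLeft k C 0 :=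
  (congrArg (deltaLeft k C 0 - ·) (LinearMap.lTensor_zero C)).trans (sub_zero _)

lemma deltaLeft_zero_t1equiv (c : C) :
    deltaLeft k C 0 (t1equiv k C c) = t2equiv k C (Coalgebra.comul c) := by
  change TensorProduct.assoc k C C k (Coalgebra.comul c ⊗ₜ[k] (1 : k)) = _
  induction Coalgebra.comul (R := k) c using TensorProduct.induction_on with
  | zero => rw [TensorProduct.zero_tmul, map_zero, map_zero]; rfl
  | tmul a b => rfl
  | add y z hy hz => rw [TensorProduct.add_tmul, map_add, hy, hz, map_add]; rfl

lemma cobar_one_t1equiv (g h c : C) :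
    cobar k C g h 1 (t1equiv k C c) =
      t2equiv k C (g ⊗ₜ[k] c - Coalgebra.comul c + c ⊗ₜ[k] h) := by
  rw [cobar_apply, Dmap_one, deltaLeft_zero_t1equiv]
  simp only [Nat.reduceAdd, Int.reduceNeg, even_two, Even.neg_pow, one_pow, one_smul,
    map_add, map_sub]
  rfl

lemma Zc_zero (g h : C) :
    Zc k C g h 0 =
      LinearMap.ker (LinearMap.toSpanSingleton k (Tpow k C 1) (t1equiv k C (g - h))) := by
  rw [Zc, cobar_zero]
  rfl

lemma Zc_zero_self (g : C) : Zc k C g g 0 = ⊤ := by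
  rw [Zc_zero, sub_self, map_zero, LinearMap.toSpanSingleton_zero, LinearMap.ker_zero]
  rfl

noncomputable def primCohZeroEquiv (g h : C) : PrimCoh k C g h 0 ≃ₗ[k] Zc k C g h 0 :=
  Submodule.quotEquivOfEqBot _ (by rw [Bc, Submodule.comap_bot, Submodule.ker_subtype])

lemma Bc_one (g h : C) :
    Bc k C g h 1 = (Submodule.span k {h - g}).map (t1equiv k C : C →ₗ[k] Tpow k C 1) := by
  rw [Bc, cobar_zero]
  refine (LinearMap.range_toSpanSingleton _).trans ?_
  rw [Submodule.map_span, Set.image_singleton, ← Submodule.span_neg, Set.neg_singleton,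
    ← map_neg, neg_sub]
  rfl

end CobarLowDegrees

section OverField

variable (k : Type u) [Field k] (C : Type u) [AddCommGroup C] [Module k C] [Coalgebra k C]

lemma mem_skewPrim_iff (h g c : C) :
    c ∈ skewPrim k C h g ↔ Coalgebra.comul c = c ⊗ₜ[k] h + g ⊗ₜ[k] c := by
  simp [skewPrim, sub_eq_zero]

lemma Zc_zero_of_ne {g h : C} (hne : g ≠ h) : Zc k C g h 0 = ⊥ := by
  rw [Zc_zero]
  exact LinearMap.ker_toSpanSingleton k
    ((t1equiv k C).map_ne_zero_iff.mpr (sub_ne_zero.mpr hne))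

lemma Zc_one (g h : C) :
    Zc k C g h 1 = (skewPrim k C h g).map (t1equiv k C : C →ₗ[k] Tpow k C 1) := by
  ext z
  obtain ⟨c, rfl⟩ := (t1equiv k C).surjective z
  rw [Zc, LinearMap.mem_ker, cobar_one_t1equiv, Submodule.mem_map_equiv,
    LinearEquiv.symm_apply_apply, mem_skewPrim_iff, LinearEquiv.map_eq_zero_iff,
    sub_add_eq_add_sub, sub_eq_zero, eq_comm, add_comm]

end OverField

theorem primCoh_low_degree_general
    (k : Type u) [Field k] (C : Type u) [AddCommGroup C] [Module k C] [Coalgebra k C]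
    (g h : C) :
    (g ≠ h → Subsingleton (PrimCoh k C g h 0)) ∧
    Nonempty ((PrimCoh k C g g 0) ≃ₗ[k] k) ∧
    Nonempty ((PrimCoh k C g h 1) ≃ₗ[k]
      (skewPrim k C h g ⧸
        (Submodule.span k {h - g}).comap (skewPrim k C h g).subtype)) := by
  refine ⟨fun hne => ?_, ⟨?_⟩, ⟨?_⟩⟩
  · have : Subsingleton (Zc k C g h 0) :=
      Submodule.subsingleton_iff_eq_bot.mpr (Zc_zero_of_ne k C hne)
    exact (primCohZeroEquiv k C g h).toEquiv.subsingleton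
  · exact (primCohZeroEquiv k C g g).trans (LinearEquiv.ofTop _ (Zc_zero_self k C g))
  · exact (subquotientCongr (t1equiv k C) (Zc_one k C g h).symm (Bc_one k C g h).symm).symm

/-- **Statement 6** (Lemma 2.1(1),(2)).
Let `C` be a coalgebra over a field `k` and `g, h` grouplike. Then:
(1) `𝔓^0_{g,h}(C) = 0` if `g ≠ h`, and `𝔓^0_{g,g}(C) = k`;
(2) `𝔓^1_{g,h}(C) ≅ P_{h,g}(C)/k(h−g)`. -/
theorem primCoh_low_degree
    (k : Type u) [Field k] (C : Type u) [AddCommGroup C] [Module k C] [Coalgebra k C]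
    (g h : C) (hg : IsGrouplike k C g) (hh : IsGrouplike k C h) :
    (g ≠ h → Subsingleton (PrimCoh k C g h 0)) ∧
    Nonempty ((PrimCoh k C g g 0) ≃ₗ[k] k) ∧
    Nonempty ((PrimCoh k C g h 1) ≃ₗ[k]
      (skewPrim k C h g ⧸
        (Submodule.span k {h - g}).comap (skewPrim k C h g).subtype)) :=
  primCoh_low_degree_general k C g h

end PrimCohPaper
end

section
/- Let H be a Hopf algebra over a field k and let h_1, h_2, g be grouplike elements of H. Then the k-linear map S^n_g : H^{⊗n} → H^{⊗n} defined by f ↦ (g ⊗ g ⊗ ⋯ ⊗ g)·f (left multiplication by g^{⊗n}) commutes with the differentials and induces an isomorphism of k-vector spaces P^n_{h_1,h_2}(H) ≅ P^n_{g h_1, g h_2}(H) for every n ≥ 0. -/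
open TensorProduct

universe u

namespace PrimCohPaper

/-!
Because `g` is grouplike, `Δ(g a) = (g ⊗ g) Δ(a)`, so left multiplication by `g^{⊗•}` commutes
with every comultiplication face of the differential, while it turns the outer faces `h₁ ⊗ -`
and `- ⊗ h₂` into `g h₁ ⊗ -` and `- ⊗ g h₂`. It is therefore a map of complexes from the
`(h₁, h₂)`-complex to the `(g h₁, g h₂)`-complex, invertible with inverse multiplication by
`S(g)^{⊗•} = (g⁻¹)^{⊗•}`, and an isomorphism of complexes induces one on cohomology.
-/

theorem _root_.Submodule.map_comap_subtype_ofSubmodules {R M N : Type*} [Ring R] [AddCommGroup M]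
    [AddCommGroup N] [Module R M] [Module R N] (e : M ≃ₗ[R] N) {p : Submodule R M}
    {q : Submodule R N} (h : p.map (e : M →ₗ[R] N) = q) (b : Submodule R M) :
    (b.comap p.subtype).map (e.ofSubmodules p q h : p →ₗ[R] q) =
      (b.map (e : M →ₗ[R] N)).comap q.subtype := by
  ext y
  simp [Submodule.map_equiv_eq_comap_symm]

section CochainIso

variable {k : Type u} [CommRing k] {C D : Type u} [AddCommGroup C] [Module k C] [Coalgebra k C]
  [AddCommGroup D] [Module k D] [Coalgebra k D] {g h : C} {g' h' : D}
  (E : ∀ m : ℕ, Tpow k C m ≃ₗ[k] Tpow k D m)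

theorem Zc_map_of_comp_cobar
    (hE : ∀ m : ℕ, (E (m + 1)).toLinearMap ∘ₗ cobar k C g h m = cobar k D g' h' m ∘ₗ E m)
    (n : ℕ) : (Zc k C g h n).map (E n).toLinearMap = Zc k D g' h' n := by
  rw [Zc, ← LinearEquiv.ker_comp (E (n + 1)), hE, LinearMap.ker_comp,
    Submodule.map_comap_eq_of_surjective (E n).surjective, Zc]

theorem Bc_map_of_comp_cobar
    (hE : ∀ m : ℕ, (E (m + 1)).toLinearMap ∘ₗ cobar k C g h m = cobar k D g' h' m ∘ₗ E m) :
    ∀ n : ℕ, (Bc k C g h n).map (E n).toLinearMap = Bc k D g' h' n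
  | 0 => Submodule.map_bot _
  | n + 1 => by rw [Bc, ← LinearMap.range_comp, hE, LinearEquiv.range_comp, Bc]

noncomputable def primCohCongr
    (hE : ∀ m : ℕ, (E (m + 1)).toLinearMap ∘ₗ cobar k C g h m = cobar k D g' h' m ∘ₗ E m)
    (n : ℕ) : PrimCoh k C g h n ≃ₗ[k] PrimCoh k D g' h' n :=
  Submodule.Quotient.equiv _ _ ((E n).ofSubmodules _ _ (Zc_map_of_comp_cobar E hE n)) <| by
    rw [Submodule.map_comap_subtype_ofSubmodules, Bc_map_of_comp_cobar E hE]

end CochainIso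

section Translation

variable (k : Type u) [Field k] (H : Type u) [Ring H] [HopfAlgebra k H]

/-- Left multiplication by `g ⊗ g ⊗ ⋯ ⊗ g` on `H^{⊗n}`. -/
noncomputable def smulTpow (g : H) : ∀ n : ℕ, Tpow k H n →ₗ[k] Tpow k H n
  | 0 => LinearMap.id
  | n + 1 => TensorProduct.map (LinearMap.mulLeft k g) (smulTpow g n)

theorem smulTpow_one : ∀ n : ℕ, smulTpow k H 1 n = LinearMap.id
  | 0 => rfl
  | n + 1 => by
    rw [smulTpow, smulTpow_one n, LinearMap.mulLeft_one, TensorProduct.map_id]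
    rfl

theorem smulTpow_mul (a b : H) : ∀ n : ℕ,
    smulTpow k H (a * b) n = smulTpow k H a n ∘ₗ smulTpow k H b n
  | 0 => rfl
  | n + 1 => by
    rw [smulTpow, smulTpow_mul a b n, LinearMap.mulLeft_mul, TensorProduct.map_comp]
    rfl

noncomputable def smulTpowEquiv (u : Hˣ) (n : ℕ) : Tpow k H n ≃ₗ[k] Tpow k H n :=
  .ofLinearMap (smulTpow k H u n) (smulTpow k H ↑u⁻¹ n)
    (by rw [← smulTpow_mul, u.mul_inv, smulTpow_one])
    (by rw [← smulTpow_mul, u.inv_mul, smulTpow_one])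

theorem smulTpow_succ_comp_lTensor {m n : ℕ} (g : H) (f : Tpow k H m →ₗ[k] Tpow k H n)
    (f' : Tpow k H m →ₗ[k] Tpow k H n)
    (hf : smulTpow k H g n ∘ₗ f = f' ∘ₗ smulTpow k H g m) :
    smulTpow k H g (n + 1) ∘ₗ f.lTensor H = f'.lTensor H ∘ₗ smulTpow k H g (m + 1) := by
  refine TensorProduct.ext' fun a x => ?_
  show (g * a) ⊗ₜ[k] smulTpow k H g n (f x) = (g * a) ⊗ₜ[k] f' (smulTpow k H g m x)
  exact congrArg _ (LinearMap.congr_fun hf x)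

theorem smulTpow_comp_gLeft (g a : H) (n : ℕ) :
    smulTpow k H g (n + 1) ∘ₗ gLeft k H a n = gLeft k H (g * a) n ∘ₗ smulTpow k H g n := by
  ext x
  rfl

theorem smulTpow_comp_hRight (g a : H) : ∀ n : ℕ,
    smulTpow k H g (n + 1) ∘ₗ hRight k H a n = hRight k H (g * a) n ∘ₗ smulTpow k H g n
  | 0 => by ext; rfl
  | n + 1 => smulTpow_succ_comp_lTensor k H g _ _ (smulTpow_comp_hRight g a n)

theorem smulTpow_comp_assoc (g : H) (n : ℕ) :
    smulTpow k H g (n + 2) ∘ₗ (TensorProduct.assoc k H H (Tpow k H n)).toLinearMap =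
      (TensorProduct.assoc k H H (Tpow k H n)).toLinearMap ∘ₗ
        TensorProduct.map (LinearMap.mulLeft k (g ⊗ₜ[k] g)) (smulTpow k H g n) := by
  refine TensorProduct.ext_threefold fun a b x => ?_
  show smulTpow k H g (n + 2) (a ⊗ₜ (b ⊗ₜ x)) =
    TensorProduct.assoc k H H (Tpow k H n) (((g ⊗ₜ g) * (a ⊗ₜ b)) ⊗ₜ smulTpow k H g n x)
  rw [Algebra.TensorProduct.tmul_mul_tmul]
  rfl

theorem smulTpow_comp_deltaLeft {g : H} (hg : Coalgebra.comul (R := k) g = g ⊗ₜ[k] g) (n : ℕ) :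
    smulTpow k H g (n + 2) ∘ₗ deltaLeft k H n = deltaLeft k H n ∘ₗ smulTpow k H g (n + 1) := by
  refine TensorProduct.ext' fun a x => ?_
  show smulTpow k H g (n + 2) (TensorProduct.assoc k H H (Tpow k H n) (Coalgebra.comul a ⊗ₜ x)) =
    TensorProduct.assoc k H H (Tpow k H n) (Coalgebra.comul (g * a) ⊗ₜ smulTpow k H g n x)
  rw [Bialgebra.comul_mul, hg]
  exact LinearMap.congr_fun (smulTpow_comp_assoc k H g n) _

theorem smulTpow_comp_Dmap {g : H} (hg : Coalgebra.comul (R := k) g = g ⊗ₜ[k] g) : ∀ n : ℕ,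
    smulTpow k H g (n + 1) ∘ₗ Dmap k H n = Dmap k H n ∘ₗ smulTpow k H g n
  | 0 => by simp [Dmap]
  | n + 1 => by
    -- stated with the `show` ascription of `Dmap`'s definition, so that `rw` finds it there
    have hD : smulTpow k H g (n + 2) ∘ₗ
          (show Tpow k H (n + 1) →ₗ[k] Tpow k H (n + 2) from (Dmap k H n).lTensor H) =
        (show Tpow k H (n + 1) →ₗ[k] Tpow k H (n + 2) from (Dmap k H n).lTensor H) ∘ₗ
          smulTpow k H g (n + 1) :=
      smulTpow_succ_comp_lTensor k H g _ _ (smulTpow_comp_Dmap hg n)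
    rw [Dmap, LinearMap.comp_sub, LinearMap.sub_comp, smulTpow_comp_deltaLeft k H hg n, hD]

theorem smulTpow_comp_cobar {g : H} (hg : Coalgebra.comul (R := k) g = g ⊗ₜ[k] g)
    (h₁ h₂ : H) (n : ℕ) :
    smulTpow k H g (n + 1) ∘ₗ cobar k H h₁ h₂ n =
      cobar k H (g * h₁) (g * h₂) n ∘ₗ smulTpow k H g n := by
  rw [cobar, cobar, LinearMap.comp_add, LinearMap.comp_sub, LinearMap.comp_smul,
    smulTpow_comp_gLeft, smulTpow_comp_Dmap k H hg, smulTpow_comp_hRight, LinearMap.add_comp,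
    LinearMap.sub_comp, LinearMap.smul_comp]

theorem translation_iso_primCoh
    (h₁ h₂ g : H)
    (hg : IsGrouplike k H g) (n : ℕ) :
    (smulTpow k H g (n + 1)) ∘ₗ (cobar k H h₁ h₂ n) =
        (cobar k H (g * h₁) (g * h₂) n) ∘ₗ (smulTpow k H g n) ∧
    Nonempty ((PrimCoh k H h₁ h₂ n) ≃ₗ[k] (PrimCoh k H (g * h₁) (g * h₂) n)) := by
  let u : Hˣ := GroupLike.toUnits k ⟨g, hg.2, hg.1⟩
  exact ⟨smulTpow_comp_cobar k H hg.1 h₁ h₂ n,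
    ⟨primCohCongr (smulTpowEquiv k H u) (smulTpow_comp_cobar k H hg.1 h₁ h₂) n⟩⟩

end Translation

end PrimCohPaper
end
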